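/- Let R be a weakly Laskerian commutative ring, X an indeterminate over R, and J an ideal of the polynomial ring R[X] that contains a monic polynomial. Then the quotient ring R[X]/J is a weakly Laskerian ring. -/

import Mathlib

/-- An `R`-module `M` is *weakly Laskerian* if every quotient of `M` has only finitely many
associated prime ideals. -/
def IsWeaklyLaskerian (R : Type*) [CommRing R] (M : Type*) [AddCommGroup M]
    [Module R M] : Prop :=
  ∀ N : Submodule R M, (associatedPrimes R (M ⧸ N)).Finite

/-! Since `J` contains a monic polynomial, `S = R[X] ⧸ J` is a finite `R`-module. Weakly Laskerian
`R`-modules are closed under quotients and extensions, so every finite `R`-module is weakly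
Laskerian; in particular every quotient `M` of `S` has finitely many associated primes over `R`.
An associated prime of `M` over `S` contracts to one over `R`, and a finite `R`-algebra has only
finitely many primes over each prime of `R`, so `M` also has finitely many associated primes
over `S`. -/

namespace IsWeaklyLaskerian

variable {R : Type*} [CommRing R] {M₁ M₂ M₃ : Type*} [AddCommGroup M₁] [Module R M₁]
  [AddCommGroup M₂] [Module R M₂] [AddCommGroup M₃] [Module R M₃]

theorem finite_associatedPrimes (h : IsWeaklyLaskerian R M₁) :
    (associatedPrimes R M₁).Finite := by
  rw [LinearEquiv.AssociatedPrimes.eq (Submodule.quotEquivOfEqBot ⊥ rfl).symm]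
  exact h ⊥

theorem of_surjective (f : M₁ →ₗ[R] M₂) (hf : Function.Surjective f)
    (h : IsWeaklyLaskerian R M₁) : IsWeaklyLaskerian R M₂ := fun N ↦ by
  have hsurj : Function.Surjective (N.mkQ ∘ₗ f) := N.mkQ_surjective.comp hf
  rw [← LinearEquiv.AssociatedPrimes.eq ((N.mkQ ∘ₗ f).quotKerEquivOfSurjective hsurj)]
  exact h _

theorem of_exact {f : M₁ →ₗ[R] M₂} {g : M₂ →ₗ[R] M₃} (hfg : Function.Exact f g)
    (hg : Function.Surjective g) (h₁ : IsWeaklyLaskerian R M₁) (h₃ : IsWeaklyLaskerian R M₃) :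
    IsWeaklyLaskerian R M₂ := fun N ↦ by
  let K := LinearMap.range (N.mkQ ∘ₗ f)
  have hK : (associatedPrimes R K).Finite :=
    (h₁.of_surjective _ (N.mkQ ∘ₗ f).surjective_rangeRestrict).finite_associatedPrimes
  have hker : LinearMap.ker g ≤ LinearMap.ker (K.mkQ ∘ₗ N.mkQ) := by
    rintro _ hx
    obtain ⟨y, rfl⟩ := hfg.linearMap_ker_eq ▸ hx
    simp only [LinearMap.mem_ker, LinearMap.comp_apply, Submodule.mkQ_apply,
      Submodule.Quotient.mk_eq_zero]
    exact LinearMap.mem_range_self (N.mkQ ∘ₗ f) y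
  have hquot : (associatedPrimes R ((M₂ ⧸ N) ⧸ K)).Finite := by
    refine (h₃.of_surjective ((LinearMap.ker g).liftQ _ hker ∘ₗ
      (g.quotKerEquivOfSurjective hg).symm.toLinearMap) ?_).finite_associatedPrimes
    rw [LinearMap.coe_comp, LinearEquiv.coe_coe]
    refine .comp ?_ (LinearEquiv.surjective _)
    rw [← LinearMap.range_eq_top, Submodule.range_liftQ, LinearMap.range_eq_top]
    exact K.mkQ_surjective.comp N.mkQ_surjective
  exact (hK.union hquot).subset
    (associatedPrimes.subset_union_of_exact K.injective_subtype (LinearMap.exact_subtype_mkQ K))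

theorem prod (h₁ : IsWeaklyLaskerian R M₁) (h₂ : IsWeaklyLaskerian R M₂) :
    IsWeaklyLaskerian R (M₁ × M₂) :=
  of_exact .inl_snd LinearMap.snd_surjective h₁ h₂

theorem pi_fin (hR : IsWeaklyLaskerian R R) (n : ℕ) : IsWeaklyLaskerian R (Fin n → R) := by
  induction n with
  | zero =>
    intro N
    simp only [associatedPrimes.eq_empty_of_subsingleton, Set.finite_empty]
  | succ n ih =>
    let e := Fin.consLinearEquiv R fun _ : Fin (n + 1) ↦ R
    exact (hR.prod ih).of_surjective e.toLinearMap e.surjective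

theorem of_finite (hR : IsWeaklyLaskerian R R) [Module.Finite R M₁] :
    IsWeaklyLaskerian R M₁ := by
  obtain ⟨n, f, hf⟩ := Module.Finite.exists_fin' R M₁
  exact (hR.pi_fin n).of_surjective f hf

end IsWeaklyLaskerian

section QuasiFinite

variable {R S M : Type*} [CommRing R] [CommRing S] [Algebra R S] [AddCommGroup M] [Module R M]
  [Module S M] [IsScalarTower R S M]

theorem IsAssociatedPrime.under {P : Ideal S} (h : IsAssociatedPrime P M) :
    IsAssociatedPrime (P.under R) M := by
  obtain ⟨hP, x, hx⟩ := h
  refine ⟨hP.comap _, x, ?_⟩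
  ext r
  simp only [Ideal.under, Ideal.mem_comap, hx, Ideal.mem_radical_iff,
    Submodule.mem_colon_singleton, Submodule.mem_bot, ← map_pow, algebraMap_smul]

theorem associatedPrimes.finite_of_quasiFinite [Algebra.QuasiFinite R S]
    (h : (associatedPrimes R M).Finite) : (associatedPrimes S M).Finite :=
  (h.biUnion fun p _ ↦ Algebra.QuasiFinite.finite_primesOver (S := S) p).subset
    fun _ hP ↦ Set.mem_biUnion hP.under ⟨hP.isPrime, ⟨rfl⟩⟩

theorem IsWeaklyLaskerian.of_quasiFinite [Algebra.QuasiFinite R S] (h : IsWeaklyLaskerian R M) :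
    IsWeaklyLaskerian S M := fun N ↦
  associatedPrimes.finite_of_quasiFinite
    ((h.of_surjective (N.mkQ.restrictScalars R) N.mkQ_surjective).finite_associatedPrimes)

end QuasiFinite

theorem Polynomial.Monic.finite_quotient_of_mem {R : Type*} [CommRing R] {f : Polynomial R}
    (hf : f.Monic) {J : Ideal (Polynomial R)} (hfJ : f ∈ J) :
    Module.Finite R (Polynomial R ⧸ J) :=
  have := hf.finite_quotient
  have hle : Ideal.span {f} ≤ J := Ideal.span_le.mpr (Set.singleton_subset_iff.mpr hfJ)
  .of_surjective (Ideal.Quotient.factorₐ R hle).toLinearMap (Ideal.Quotient.factor_surjective hle)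

/-- If `R` is a weakly Laskerian commutative ring and `J` is an ideal of `R[X]` containing
a monic polynomial, then the quotient ring `R[X] ⧸ J` is weakly Laskerian. -/
theorem isWeaklyLaskerian_polynomial_quotient {R : Type*} [CommRing R]
    (hR : IsWeaklyLaskerian R R) (J : Ideal (Polynomial R))
    (hJ : ∃ f ∈ J, f.Monic) :
    IsWeaklyLaskerian (Polynomial R ⧸ J) (Polynomial R ⧸ J) := by
  obtain ⟨f, hfJ, hf⟩ := hJ
  have : Module.Finite R (Polynomial R ⧸ J) := hf.finite_quotient_of_mem hfJ
  have hWL : IsWeaklyLaskerian R (Polynomial R ⧸ J) := hR.of_finite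
  exact hWL.of_quasiFinite
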